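/- For every λ ∈ ℂ with λ ≠ 1 and λ ≠ 0, every integer n ≥ 1, every a ∈ ℤ_{≥0}, and all x, the identity Σ_{l=0}^{an} C(an, l) · (-λ)^{-l} · (x+l)^{n-1} = (1-λ)^{-n} · Σ_{l=0}^{(a+1)n} C((a+1)n, l) · (-λ)^{n-l} · H_{n-1}^{(n)}(x+l|λ) holds as an identity of polynomials in x. -/

import Mathlib

/-!
Write `P = e^t - λ`. Expanding `P^k e^{xt}` binomially gives `Σ_j C(k,j) (-λ)^{k-j} e^{(x+j)t}`,
so the left-hand side is the coefficient of `t^{n-1}/(n-1)!` in `(-λ)^{-an} P^{an} e^{xt}`.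
Multiplying the generating functions of the Frobenius–Euler polynomials on the right-hand side by
`P^n` turns each of them into `(1-λ)^n e^{(x+l)t}`, and the same expansion with `k = (a+1)n`
collapses the sum to `(1-λ)^n (-λ)^{-an} P^{(a+1)n} e^{xt}`. Since `P` has constant coefficient
`1 - λ ≠ 0`, the factor `P^n` cancels in `ℂ⟦t⟧`, and comparing coefficients gives the identity.
-/

/-- The formal power series `e^{ct} = ∑_{m≥0} c^m t^m / m!` over `ℂ`. -/
noncomputable def expPS (c : ℂ) : PowerSeries ℂ :=
  PowerSeries.mk fun m => c ^ m / (m.factorial : ℂ)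

open PowerSeries Finset

section ExponentialGeneratingFunction

variable {K : Type*} [Field K]

noncomputable def egf (p : ℕ → K) : K⟦X⟧ :=
  mk fun m => p m / m.factorial

theorem egf_injective [CharZero K] : Function.Injective (egf (K := K)) := by
  intro p q h
  funext m
  have hm := congrArg (coeff m) h
  simp only [egf, coeff_mk] at hm
  exact (div_left_inj' (Nat.cast_ne_zero.mpr m.factorial_ne_zero)).mp hm

theorem sum_egf {ι : Type*} (s : Finset ι) (p : ι → ℕ → K) :
    ∑ i ∈ s, egf (p i) = egf fun m => ∑ i ∈ s, p i m := by
  ext m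
  simp only [egf, map_sum, coeff_mk, sum_div]

theorem C_mul_egf (c : K) (p : ℕ → K) : C c * egf p = egf fun m => c * p m := by
  ext m
  simp only [egf, coeff_C_mul, coeff_mk, mul_div_assoc]

end ExponentialGeneratingFunction

theorem expPS_eq_egf (c : ℂ) : expPS c = egf (c ^ ·) := rfl

theorem expPS_eq_rescale_exp (c : ℂ) : expPS c = rescale c (exp ℂ) := by
  ext m
  simp [expPS, coeff_rescale, coeff_exp, div_eq_mul_inv]

theorem expPS_mul_expPS (a b : ℂ) : expPS a * expPS b = expPS (a + b) := by
  simp only [expPS_eq_rescale_exp, exp_mul_exp_eq_exp_add]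

theorem expPS_one_pow (k : ℕ) : expPS 1 ^ k = expPS k := by
  induction k with
  | zero => simp [expPS_eq_rescale_exp]
  | succ k ih => rw [pow_succ, ih, expPS_mul_expPS]; push_cast; rfl

theorem constantCoeff_expPS (c : ℂ) : constantCoeff (expPS c) = 1 := by
  simp [← coeff_zero_eq_constantCoeff_apply, expPS]

theorem expPS_sub_C_ne_zero {lam : ℂ} (hlam : lam ≠ 1) : expPS 1 - C lam ≠ 0 := by
  intro h
  have h0 := congrArg constantCoeff h
  rw [map_sub, constantCoeff_expPS, constantCoeff_C, map_zero, sub_eq_zero] at h0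
  exact hlam h0.symm

theorem expPS_sub_C_pow_mul_expPS (lam x : ℂ) (k : ℕ) :
    (expPS 1 - C lam) ^ k * expPS x =
      ∑ j ∈ range (k + 1), C ((k.choose j : ℂ) * (-lam) ^ (k - j)) * expPS (x + j) := by
  rw [sub_eq_add_neg, add_pow, sum_mul]
  refine sum_congr rfl fun j _ => ?_
  rw [expPS_one_pow, ← map_neg, ← map_pow, map_mul, map_natCast, add_comm x,
    ← expPS_mul_expPS]
  ring

theorem sum_choose_zpow_mul_expPS {lam : ℂ} (hlam : lam ≠ 0) (r : ℤ) (k : ℕ) (x : ℂ) :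
    ∑ j ∈ range (k + 1), C ((k.choose j : ℂ) * (-lam) ^ (r - j)) * expPS (x + j) =
      C ((-lam) ^ (r - k)) * ((expPS 1 - C lam) ^ k * expPS x) := by
  rw [expPS_sub_C_pow_mul_expPS, mul_sum]
  refine sum_congr rfl fun j hj => ?_
  have hjk : j ≤ k := Nat.lt_succ_iff.mp (mem_range.mp hj)
  have hpow : (-lam) ^ (r - j) = (-lam) ^ (r - k) * (-lam) ^ (k - j) := by
    rw [← zpow_natCast, Nat.cast_sub hjk, ← zpow_add₀ (neg_ne_zero.mpr hlam)]
    ring_nf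
  rw [← mul_assoc, ← map_mul, hpow]
  ring_nf

theorem stmt1_general (lam : ℂ) (hlam : lam ≠ 1) (hlam0 : lam ≠ 0) (n : ℕ) (a : ℕ)
    (H : ℕ → ℕ → ℂ → ℂ)
    (hH : ∀ (α : ℕ) (x : ℂ),
      (expPS 1 - PowerSeries.C (R := ℂ) lam) ^ α *
          PowerSeries.mk (fun m => H α m x / (m.factorial : ℂ)) =
        PowerSeries.C (R := ℂ) (1 - lam) ^ α * expPS x) :
    ∀ x : ℂ,
      ∑ l ∈ Finset.range (a * n + 1),
          ((a * n).choose l : ℂ) * (-lam) ^ (-(l : ℤ)) * (x + l) ^ (n - 1) =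
        ((1 - lam) ^ n)⁻¹ *
          ∑ l ∈ Finset.range ((a + 1) * n + 1),
            (((a + 1) * n).choose l : ℂ) * (-lam) ^ ((n : ℤ) - (l : ℤ)) *
              H n (n - 1) (x + l) := by
  intro x
  set P := expPS 1 - C lam
  have hG : ∀ y, P ^ n * egf (H n · y) = C ((1 - lam) ^ n) * expPS y := fun y =>
    (hH n y).trans (by rw [map_pow])
  have hexp : ((n : ℤ) - ((a + 1) * n : ℕ)) = 0 - (a * n : ℕ) := by push_cast; ring
  have key : P ^ n * ∑ l ∈ range ((a + 1) * n + 1),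
        C (((a + 1) * n).choose l * (-lam) ^ ((n : ℤ) - l)) * egf (H n · (x + l)) =
      P ^ n * (C ((1 - lam) ^ n) * ∑ l ∈ range (a * n + 1),
        C ((a * n).choose l * (-lam) ^ ((0 : ℤ) - l)) * expPS (x + l)) := by
    calc _ = C ((1 - lam) ^ n) * ∑ l ∈ range ((a + 1) * n + 1),
            C (((a + 1) * n).choose l * (-lam) ^ ((n : ℤ) - l)) * expPS (x + l) := by
          simp only [mul_sum, mul_left_comm (P ^ n), hG, mul_left_comm (C ((1 - lam) ^ n))]
      _ = _ := by
          rw [sum_choose_zpow_mul_expPS hlam0, sum_choose_zpow_mul_expPS hlam0, hexp,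
            add_one_mul, pow_add]
          ring
  replace key := mul_left_cancel₀ (pow_ne_zero n (expPS_sub_C_ne_zero hlam)) key
  simp only [expPS_eq_egf, C_mul_egf, sum_egf] at key
  have hcoeff := congrFun (egf_injective key) (n - 1)
  simp only [zero_sub] at hcoeff
  rw [hcoeff, inv_mul_cancel_left₀ (pow_ne_zero n (sub_ne_zero.mpr (Ne.symm hlam)))]

/-- For `λ ≠ 1`, `λ ≠ 0`, `n ≥ 1`, `a ∈ ℤ_{≥0}` and all `x`,
`∑_{l=0}^{an} C(an,l) (-λ)^{-l} (x+l)^{n-1}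
  = (1-λ)^{-n} ∑_{l=0}^{(a+1)n} C((a+1)n,l) (-λ)^{n-l} H_{n-1}^{(n)}(x+l|λ)`,
where the Frobenius–Euler polynomials `H_m^{(α)}(x|λ)` are characterized by
`((1-λ)/(e^t-λ))^α e^{xt} = ∑_m H_m^{(α)}(x|λ) t^m/m!`. -/
theorem stmt1 (lam : ℂ) (hlam : lam ≠ 1) (hlam0 : lam ≠ 0) (n : ℕ) (hn : 1 ≤ n) (a : ℕ)
    (H : ℕ → ℕ → ℂ → ℂ)
    (hH : ∀ (α : ℕ) (x : ℂ),
      (expPS 1 - PowerSeries.C (R := ℂ) lam) ^ α *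
          PowerSeries.mk (fun m => H α m x / (m.factorial : ℂ)) =
        PowerSeries.C (R := ℂ) (1 - lam) ^ α * expPS x) :
    ∀ x : ℂ,
      ∑ l ∈ Finset.range (a * n + 1),
          ((a * n).choose l : ℂ) * (-lam) ^ (-(l : ℤ)) * (x + l) ^ (n - 1) =
        ((1 - lam) ^ n)⁻¹ *
          ∑ l ∈ Finset.range ((a + 1) * n + 1),
            (((a + 1) * n).choose l : ℂ) * (-lam) ^ ((n : ℤ) - (l : ℤ)) *
              H n (n - 1) (x + l) :=
  stmt1_general lam hlam hlam0 n a H hH
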